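/- arXiv:2603.14514 — 2 statements merged into one kernel-verified Lean document; each statement's English description precedes it below -/
import Mathlib

section
/- For every fixed z ∈ 𝒵, the map x ↦ V(x, z) is (2 t_mix L_g √d)-Lipschitz: ‖V(x, z) − V(x′, z)‖ ≤ 2 t_mix L_g √d · ‖x − x′‖ for all x, x′ ∈ ℝ^d. -/
open MeasureTheory ProbabilityTheory Filter
open scoped BigOperators ENNReal RealInnerProductSpace Topology

/-!
Since `∇f(x) = ∫ g(x, ·) dπ`, the difference `V(x, z) - V(x', z)` is the series
`∑ₖ (∫ G dpᵏ(z) - ∫ G dπ)` for `G = g(x, ·) - g(x', ·)`, which is bounded by `L_g ‖x - x'‖`.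
Integrating `G` against the Jordan decomposition of `pᵏ(z) - π` bounds the `k`-th term by
`L_g ‖x - x'‖ ‖pᵏ(z) - π‖_TV ≤ L_g ‖x - x'‖ 2^(-⌊k / t_mix⌋)`, and each power `2^(-j)` occurs for
exactly `t_mix` values of `k`, so the series of bounds sums to `2 t_mix L_g ‖x - x'‖`. This is
the claim without the factor `√d`, which is `≥ 1` unless `d = 0`, when the space is trivial.
Both series converge because `g(x, ·)` is bounded for every `x`.
-/

/-- The `k`-step transition kernel `p^{(k)}` induced by a transition kernel `p`
(`p^{(0)}` is the identity/Dirac kernel). -/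
noncomputable def kstep {𝒵 : Type*} [MeasurableSpace 𝒵] (p : Kernel 𝒵 𝒵) : ℕ → Kernel 𝒵 𝒵 :=
  fun n => Nat.rec Kernel.id (fun _ κ => κ.comp p) n

instance kstep_isMarkov {𝒵 : Type*} [MeasurableSpace 𝒵] (p : Kernel 𝒵 𝒵) [IsMarkovKernel p] :
    ∀ n, IsMarkovKernel (kstep p n)
  | 0 => inferInstanceAs (IsMarkovKernel Kernel.id)
  | n + 1 => by
      have := kstep_isMarkov p n
      exact inferInstanceAs (IsMarkovKernel ((kstep p n).comp p))

/-- The total variation norm `‖μ - ν‖_TV = |μ - ν|(𝒵)` of the difference of two finite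
measures, where `|·|` denotes the total variation (Jordan decomposition) measure. -/
noncomputable def tvDist {𝒵 : Type*} [MeasurableSpace 𝒵] (μ ν : Measure 𝒵)
    [IsFiniteMeasure μ] [IsFiniteMeasure ν] : ℝ :=
  ((μ.toSignedMeasure - ν.toSignedMeasure).totalVariation Set.univ).toReal

/-- The solution `V(x, z) = 𝔼[Σ_{ℓ≥0} (g(x, Z_ℓ) - ∇f(x)) | Z₀ = z]
= Σ_{ℓ≥0} (∫ g(x, z') p^{(ℓ)}(dz' | z) - ∇f(x))` of the Poisson equation. -/
noncomputable def poissonV {d : ℕ} {𝒵 : Type*} [MeasurableSpace 𝒵]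
    (p : Kernel 𝒵 𝒵) (f : EuclideanSpace ℝ (Fin d) → ℝ)
    (g : EuclideanSpace ℝ (Fin d) → 𝒵 → EuclideanSpace ℝ (Fin d))
    (x : EuclideanSpace ℝ (Fin d)) (z : 𝒵) : EuclideanSpace ℝ (Fin d) :=
  ∑' ℓ : ℕ, ((∫ z', g x z' ∂((kstep p ℓ) z)) - gradient f x)

theorem hasSum_pow_div_of_lt_one (t : ℕ) [NeZero t] {r : ℝ} (h₀ : 0 ≤ r) (h₁ : r < 1) :
    HasSum (fun n : ℕ => r ^ (n / t)) ((1 - r)⁻¹ * t) := by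
  have hgeom := hasSum_geometric_of_lt_one h₀ h₁
  have hconst : HasSum (fun _ : Fin t => (1 : ℝ)) t := by
    convert hasSum_fintype (fun _ : Fin t => (1 : ℝ)); simp
  have hsum : Summable fun q : ℕ × Fin t => r ^ q.1 * 1 :=
    summable_mul_of_summable_norm (f := fun n : ℕ => r ^ n) (g := fun _ : Fin t => (1 : ℝ))
      (by simpa [abs_of_nonneg h₀] using hgeom.summable) .of_finite
  have := (Nat.divModEquiv t).hasSum_iff.mpr (hgeom.mul hconst hsum)
  simpa only [Function.comp_def, Nat.divModEquiv_apply, mul_one] using this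

section TotalVariation

variable {𝒵 E : Type*} [MeasurableSpace 𝒵] [NormedAddCommGroup E] [NormedSpace ℝ E]

theorem add_negPart_eq_add_posPart (μ ν : Measure 𝒵) [IsFiniteMeasure μ] [IsFiniteMeasure ν] :
    μ + (μ.toSignedMeasure - ν.toSignedMeasure).toJordanDecomposition.negPart
      = ν + (μ.toSignedMeasure - ν.toSignedMeasure).toJordanDecomposition.posPart := by
  have h := (μ.toSignedMeasure - ν.toSignedMeasure).toSignedMeasure_toJordanDecomposition
  rw [← Measure.toSignedMeasure_eq_toSignedMeasure_iff, Measure.toSignedMeasure_add,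
    Measure.toSignedMeasure_add, ← sub_eq_sub_iff_add_eq_add.mp h]
  abel

theorem norm_integral_sub_integral_le_mul_tvDist (μ ν : Measure 𝒵) [IsFiniteMeasure μ]
    [IsFiniteMeasure ν] {G : 𝒵 → E} (hG : StronglyMeasurable G) {M : ℝ}
    (hM : ∀ z, ‖G z‖ ≤ M) :
    ‖∫ z, G z ∂μ - ∫ z, G z ∂ν‖ ≤ M * tvDist μ ν := by
  set P := (μ.toSignedMeasure - ν.toSignedMeasure).toJordanDecomposition.posPart
  set N := (μ.toSignedMeasure - ν.toSignedMeasure).toJordanDecomposition.negPart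
  have hint (ρ : Measure 𝒵) [IsFiniteMeasure ρ] : Integrable G ρ :=
    .of_bound hG.aestronglyMeasurable M (.of_forall hM)
  have hsplit : ∫ z, G z ∂μ - ∫ z, G z ∂ν = ∫ z, G z ∂P - ∫ z, G z ∂N := by
    have := congrArg (fun ρ => ∫ z, G z ∂ρ) (add_negPart_eq_add_posPart μ ν)
    simp only [integral_add_measure (hint _) (hint _)] at this
    rw [sub_eq_sub_iff_add_eq_add, this, add_comm]
  have htv : tvDist μ ν = P.real Set.univ + N.real Set.univ := by
    rw [tvDist, SignedMeasure.totalVariation, Measure.real, Measure.real, Measure.add_apply,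
      ENNReal.toReal_add (measure_ne_top _ _) (measure_ne_top _ _)]
  calc ‖∫ z, G z ∂μ - ∫ z, G z ∂ν‖ ≤ ‖∫ z, G z ∂P‖ + ‖∫ z, G z ∂N‖ := hsplit ▸ norm_sub_le _ _
    _ ≤ M * P.real Set.univ + M * N.real Set.univ :=
      add_le_add (norm_integral_le_of_norm_le_const (.of_forall hM))
        (norm_integral_le_of_norm_le_const (.of_forall hM))
    _ = M * tvDist μ ν := by rw [htv, mul_add]

end TotalVariation

section MarkovChain

variable {𝒵 E : Type*} [MeasurableSpace 𝒵] [NormedAddCommGroup E] [NormedSpace ℝ E]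
  {p : Kernel 𝒵 𝒵} [IsMarkovKernel p] {π : Measure 𝒵} [IsProbabilityMeasure π] {tmix : ℕ}
  {G : 𝒵 → E} {M : ℝ}

theorem norm_integral_kstep_sub_le
    (hmix : ∀ k z, tvDist (kstep p k z) π ≤ (2 : ℝ)⁻¹ ^ (k / tmix))
    (hG : StronglyMeasurable G) (hM : ∀ z, ‖G z‖ ≤ M) (k : ℕ) (z : 𝒵) :
    ‖∫ z', G z' ∂(kstep p k z) - ∫ z', G z' ∂π‖ ≤ M * (2 : ℝ)⁻¹ ^ (k / tmix) :=
  (norm_integral_sub_integral_le_mul_tvDist _ _ hG hM).trans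
    (mul_le_mul_of_nonneg_left (hmix k z) ((norm_nonneg _).trans (hM z)))

variable [NeZero tmix]

theorem summable_integral_kstep_sub [CompleteSpace E]
    (hmix : ∀ k z, tvDist (kstep p k z) π ≤ (2 : ℝ)⁻¹ ^ (k / tmix))
    (hG : StronglyMeasurable G) (hM : ∀ z, ‖G z‖ ≤ M) (z : 𝒵) :
    Summable fun k => ∫ z', G z' ∂(kstep p k z) - ∫ z', G z' ∂π :=
  .of_norm_bounded ((hasSum_pow_div_of_lt_one tmix (by norm_num) (by norm_num)).summable.mul_left M)
    (norm_integral_kstep_sub_le hmix hG hM · z)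

theorem norm_tsum_integral_kstep_sub_le
    (hmix : ∀ k z, tvDist (kstep p k z) π ≤ (2 : ℝ)⁻¹ ^ (k / tmix))
    (hG : StronglyMeasurable G) (hM : ∀ z, ‖G z‖ ≤ M) (z : 𝒵) :
    ‖∑' k, (∫ z', G z' ∂(kstep p k z) - ∫ z', G z' ∂π)‖ ≤ 2 * tmix * M := by
  have := tsum_of_norm_bounded
    ((hasSum_pow_div_of_lt_one tmix (by norm_num) (by norm_num)).mul_left M)
    (norm_integral_kstep_sub_le hmix hG hM · z)
  exact this.trans_eq (by norm_num; ring)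

end MarkovChain

theorem EuclideanSpace.norm_le_mul_sqrt_of_norm_le {d : ℕ} {v : EuclideanSpace ℝ (Fin d)} {c : ℝ}
    (h : ‖v‖ ≤ c) : ‖v‖ ≤ c * √d := by
  rcases Nat.eq_zero_or_pos d with rfl | hd
  · simp [Subsingleton.elim v 0]
  · exact h.trans (le_mul_of_one_le_right ((norm_nonneg v).trans h)
      (Real.one_le_sqrt.mpr (by exact_mod_cast hd)))

theorem poissonV_sub_poissonV {d : ℕ} {𝒵 : Type*} [MeasurableSpace 𝒵] {p : Kernel 𝒵 𝒵}
    [IsMarkovKernel p] {π : Measure 𝒵} [IsProbabilityMeasure π] {tmix : ℕ} [NeZero tmix]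
    (hmix : ∀ k z, tvDist (kstep p k z) π ≤ (2 : ℝ)⁻¹ ^ (k / tmix))
    {f : EuclideanSpace ℝ (Fin d) → ℝ}
    {g : EuclideanSpace ℝ (Fin d) → 𝒵 → EuclideanSpace ℝ (Fin d)}
    (hgrad : ∀ x, gradient f x = ∫ z, g x z ∂π) {x x' : EuclideanSpace ℝ (Fin d)} {M M' : ℝ}
    (hx : StronglyMeasurable (g x)) (hx' : StronglyMeasurable (g x'))
    (hM : ∀ z, ‖g x z‖ ≤ M) (hM' : ∀ z, ‖g x' z‖ ≤ M') (z : 𝒵) :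
    poissonV p f g x z - poissonV p f g x' z =
      ∑' k, (∫ z', (g x z' - g x' z') ∂(kstep p k z) - ∫ z', (g x z' - g x' z') ∂π) := by
  have hint {y} {B : ℝ} (hy : StronglyMeasurable (g y)) (hB : ∀ z, ‖g y z‖ ≤ B)
      (ρ : Measure 𝒵) [IsFiniteMeasure ρ] : Integrable (g y) ρ :=
    .of_bound hy.aestronglyMeasurable B (.of_forall hB)
  simp only [poissonV, hgrad]
  rw [← (summable_integral_kstep_sub hmix hx hM z).tsum_sub
    (summable_integral_kstep_sub hmix hx' hM' z)]
  congr 1 with k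
  rw [integral_sub (hint hx hM _) (hint hx' hM' _), integral_sub (hint hx hM _) (hint hx' hM' _),
    sub_sub_sub_comm]

theorem poisson_solution_lipschitz_general (d : ℕ)
    (𝒵 : Type) [MeasurableSpace 𝒵]
    (p : Kernel 𝒵 𝒵) [IsMarkovKernel p] (π : Measure 𝒵) [IsProbabilityMeasure π]
    (tmix : ℕ) (htmix : 1 ≤ tmix)
    (f : EuclideanSpace ℝ (Fin d) → ℝ)
    (g : EuclideanSpace ℝ (Fin d) → 𝒵 → EuclideanSpace ℝ (Fin d))
    (fstar Lg A B C : ℝ)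
    (hmix : ∀ (k : ℕ) (z : 𝒵), tvDist ((kstep p k) z) π ≤ (2 : ℝ)⁻¹ ^ (k / tmix))
    (hgrad : ∀ x, gradient f x = ∫ z, g x z ∂π)
    (hgmeas : ∀ x, Measurable (g x))
    (hgLip : ∀ z x y, ‖g x z - g y z‖ ≤ Lg * ‖x - y‖)
    (hgABC : ∀ x z, ‖g x z‖ ^ 2 ≤ A * ‖gradient f x‖ ^ 2 + B * (f x - fstar) + C) :
    ∀ (z : 𝒵) (x x' : EuclideanSpace ℝ (Fin d)),
      ‖poissonV p f g x z - poissonV p f g x' z‖ ≤ 2 * tmix * Lg * Real.sqrt d * ‖x - x'‖ := by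
  intro z x x'
  have : NeZero tmix := ⟨by omega⟩
  have hgsm (y) : StronglyMeasurable (g y) := (hgmeas y).stronglyMeasurable
  have hgbdd (y z) : ‖g y z‖ ≤ √(A * ‖gradient f y‖ ^ 2 + B * (f y - fstar) + C) :=
    Real.le_sqrt_of_sq_le (hgABC y z)
  rw [poissonV_sub_poissonV hmix hgrad (hgsm x) (hgsm x') (hgbdd x) (hgbdd x') z]
  have hdimfree := norm_tsum_integral_kstep_sub_le hmix ((hgsm x).sub (hgsm x'))
    (fun z' => hgLip z' x x') z
  exact (EuclideanSpace.norm_le_mul_sqrt_of_norm_le hdimfree).trans_eq (by ring)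

/-- Lemma C.3: for every fixed `z ∈ 𝒵`, the map `x ↦ V(x, z)` is `(2 t_mix L_g √d)`-Lipschitz:
`‖V(x,z) - V(x',z)‖ ≤ 2 t_mix L_g √d ‖x - x'‖` for all `x, x' ∈ ℝ^d`. -/
theorem poisson_solution_lipschitz (d : ℕ)
    (𝒵 : Type) [MeasurableSpace 𝒵] [TopologicalSpace 𝒵] [CompactSpace 𝒵] [Nonempty 𝒵]
    (p : Kernel 𝒵 𝒵) [IsMarkovKernel p] (π : Measure 𝒵) [IsProbabilityMeasure π]
    (tmix : ℕ) (htmix : 1 ≤ tmix)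
    (f : EuclideanSpace ℝ (Fin d) → ℝ)
    (g : EuclideanSpace ℝ (Fin d) → 𝒵 → EuclideanSpace ℝ (Fin d))
    (fstar Lg A B C : ℝ)
    (hA : 0 ≤ A) (hB : 0 ≤ B) (hC : 0 ≤ C)
    (hbdd : BddBelow (Set.range f)) (hfstar : fstar = ⨅ y, f y)
    (hinv : π.bind (fun z => p z) = π)
    (hmix : ∀ (k : ℕ) (z : 𝒵), tvDist ((kstep p k) z) π ≤ (2 : ℝ)⁻¹ ^ (k / tmix))
    (hgrad : ∀ x, gradient f x = ∫ z, g x z ∂π)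
    (hgmeas : ∀ x, Measurable (g x))
    (hgLip : ∀ z x y, ‖g x z - g y z‖ ≤ Lg * ‖x - y‖)
    (hgABC : ∀ x z, ‖g x z‖ ^ 2 ≤ A * ‖gradient f x‖ ^ 2 + B * (f x - fstar) + C) :
    ∀ (z : 𝒵) (x x' : EuclideanSpace ℝ (Fin d)),
      ‖poissonV p f g x z - poissonV p f g x' z‖ ≤ 2 * tmix * Lg * Real.sqrt d * ‖x - x'‖ :=
  poisson_solution_lipschitz_general d 𝒵 p π tmix htmix f g fstar Lg A B C hmix hgrad hgmeas hgLip
    hgABC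
end

section
/- Suppose 2AL + B > 0. Then for every x ∈ ℝ^d and z ∈ 𝒵: ⟨∇f(x), V(x, z)⟩ ≤ 2 t_mix √d ( √(2L(2AL + B)) · (f(x) − f⋆) + √( L C² / (2(2AL + B)) ) ). -/
open MeasureTheory ProbabilityTheory Filter
open scoped BigOperators ENNReal RealInnerProductSpace Topology

/-!
Bound `⟪∇f(x), V(x, z)⟫` by `‖∇f(x)‖ ‖V(x, z)‖`. The `ℓ`-th term of the series `V(x, z)` is the
difference of the integrals of `g(x, ·)` against `p^{(ℓ)}(· | z)` and `π`, so its norm is at most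
`sup ‖g(x, ·)‖ · ‖p^{(ℓ)}(· | z) - π‖_TV ≤ sup ‖g(x, ·)‖ · 2^{-⌊ℓ / t_mix⌋}`, and these bounds sum to
`2 t_mix sup ‖g(x, ·)‖`. The growth condition bounds `sup ‖g(x, ·)‖²` by
`A ‖∇f(x)‖² + B (f(x) - f⋆) + C`, and the descent lemma along a gradient step of length `1 / L`
gives `‖∇f(x)‖² ≤ 2L (f(x) - f⋆)`. Completing a square yields the bound with `√d` replaced by `1`.
-/

lemma hasSum_inv_two_pow_div (t : ℕ) [NeZero t] :
    HasSum (fun ℓ : ℕ => (2⁻¹ : ℝ) ^ (ℓ / t)) (2 * t) := by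
  have hgeom : HasSum (fun q : ℕ => (2⁻¹ : ℝ) ^ q) 2 := by
    simpa only [one_div] using hasSum_geometric_two
  have hconst : HasSum (fun _ : Fin t => (1 : ℝ)) t := by
    simpa using hasSum_fintype (fun _ : Fin t => (1 : ℝ))
  have hnorm : Summable fun q : ℕ => ‖(2⁻¹ : ℝ) ^ q‖ := by
    simpa only [norm_pow, norm_inv, Real.norm_ofNat] using hgeom.summable
  have hone : Summable fun _ : Fin t => ‖(1 : ℝ)‖ := .of_finite
  have hprod : HasSum (fun x : ℕ × Fin t => (2⁻¹ : ℝ) ^ x.1 * 1) (2 * t) :=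
    hgeom.mul hconst (summable_mul_of_summable_norm hnorm hone)
  rw [← (Nat.divModEquiv t).symm.hasSum_iff]
  refine hprod.congr_fun ?_
  rintro ⟨q, r⟩
  simp only [Function.comp_apply, Nat.divModEquiv_symm_apply, mul_one]
  rw [Nat.add_comm, Nat.add_mul_div_right _ _ (NeZero.pos t), Nat.div_eq_of_lt r.isLt, zero_add]

namespace MeasureTheory.Measure

variable {𝒵 : Type*} [MeasurableSpace 𝒵] (μ ν : Measure 𝒵) [IsFiniteMeasure μ] [IsFiniteMeasure ν]

lemma add_sub_eq_add_sub : μ + (ν - μ) = ν + (μ - ν) := by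
  have h := sub_toSignedMeasure_eq_toSignedMeasure_sub (μ := μ) (ν := ν)
  rw [sub_eq_sub_iff_add_eq_add, ← toSignedMeasure_add, ← toSignedMeasure_add] at h
  exact (toSignedMeasure_eq_toSignedMeasure_iff.mp h).trans (add_comm _ _)

lemma tvDist_eq_measureReal_sub_add :
    tvDist μ ν = (μ - ν).real Set.univ + (ν - μ).real Set.univ := by
  rw [tvDist, SignedMeasure.totalVariation, toJordanDecomposition_toSignedMeasure_sub]
  exact measureReal_add_apply

variable {μ ν} in
lemma norm_integral_sub_integral_le_mul_tvDist {E : Type*} [NormedAddCommGroup E] [NormedSpace ℝ E]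
    {h : 𝒵 → E} (hm : StronglyMeasurable h) {M : ℝ} (hM : ∀ z, ‖h z‖ ≤ M) :
    ‖∫ z, h z ∂μ - ∫ z, h z ∂ν‖ ≤ M * tvDist μ ν := by
  have hint : ∀ (ρ : Measure 𝒵) [IsFiniteMeasure ρ], Integrable h ρ := fun ρ _ =>
    (integrable_const M).mono' hm.aestronglyMeasurable (.of_forall hM)
  have hsplit : ∫ z, h z ∂μ - ∫ z, h z ∂ν = ∫ z, h z ∂(μ - ν) - ∫ z, h z ∂(ν - μ) := by
    rw [sub_eq_sub_iff_add_eq_add, ← integral_add_measure (hint _) (hint _),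
      ← integral_add_measure (hint _) (hint _), add_sub_eq_add_sub, add_comm (μ - ν)]
  rw [hsplit, tvDist_eq_measureReal_sub_add, mul_add]
  exact (norm_sub_le _ _).trans (add_le_add
    (norm_integral_le_of_norm_le_const (.of_forall hM))
    (norm_integral_le_of_norm_le_const (.of_forall hM)))

end MeasureTheory.Measure

lemma le_sub_div_two_of_forall_mem_Ico {a b c : ℝ}
    (h : ∀ s ∈ Set.Ico (0 : ℝ) 1, a ≤ b - c * (s - s ^ 2 / 2)) : a ≤ b - c / 2 := by
  have hlim : Tendsto (fun s : ℝ => b - c * (s - s ^ 2 / 2)) (𝓝[<] 1) (𝓝 (b - c / 2)) := by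
    have hcont : Continuous fun s : ℝ => b - c * (s - s ^ 2 / 2) := by fun_prop
    convert (hcont.tendsto 1).mono_left nhdsWithin_le_nhds using 2
    ring
  exact ge_of_tendsto hlim (eventually_of_mem (Ico_mem_nhdsLT zero_lt_one) h)

section Smooth

open Set

variable {F : Type*} [NormedAddCommGroup F] [InnerProductSpace ℝ F] [CompleteSpace F]
  {f : F → ℝ} {L : ℝ}

lemma apply_add_le_add_inner_add_sq_norm
    (hsmooth : ∀ y y', ‖gradient f y - gradient f y'‖ ≤ L * ‖y - y'‖) (x u : F)
    (hdiff : ∀ t ∈ Icc (0 : ℝ) 1, DifferentiableAt ℝ f (x + t • u)) :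
    f (x + u) ≤ f x + ⟪gradient f x, u⟫ + L / 2 * ‖u‖ ^ 2 := by
  set φ : ℝ → ℝ := fun t => f (x + t • u) - t * ⟪gradient f x, u⟫ - L / 2 * t ^ 2 * ‖u‖ ^ 2
  have hφ : ∀ t ∈ Icc (0 : ℝ) 1, HasDerivAt φ
      (⟪gradient f (x + t • u) - gradient f x, u⟫ - L * t * ‖u‖ ^ 2) t := by
    intro t ht
    have hpath : HasDerivAt (fun t : ℝ => x + t • u) u t := by
      simpa using ((hasDerivAt_id t).smul_const u).const_add x
    have hf : HasDerivAt (fun t => f (x + t • u)) ⟪gradient f (x + t • u), u⟫ t := by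
      have := (hdiff t ht).hasGradientAt.hasFDerivAt.comp_hasDerivAt t hpath
      rwa [InnerProductSpace.toDual_apply_apply] at this
    refine ((hf.sub ((hasDerivAt_id t).mul_const _)).sub
      (((hasDerivAt_pow 2 t).const_mul (L / 2)).mul_const (‖u‖ ^ 2))).congr_deriv ?_
    rw [inner_sub_left]
    push_cast
    ring
  have hnonpos : ∀ t ∈ Icc (0 : ℝ) 1,
      ⟪gradient f (x + t • u) - gradient f x, u⟫ - L * t * ‖u‖ ^ 2 ≤ 0 := by
    intro t ht
    have hlip : ‖gradient f (x + t • u) - gradient f x‖ ≤ L * t * ‖u‖ := by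
      simpa [norm_smul, abs_of_nonneg ht.1, mul_assoc] using hsmooth (x + t • u) x
    nlinarith [real_inner_le_norm (gradient f (x + t • u) - gradient f x) u,
      mul_le_mul_of_nonneg_right hlip (norm_nonneg u)]
  have hanti : AntitoneOn φ (Icc 0 1) :=
    antitoneOn_of_hasDerivWithinAt_nonpos (convex_Icc 0 1)
      (fun t ht => (hφ t ht).continuousAt.continuousWithinAt)
      (fun t ht => (hφ t (interior_subset ht)).hasDerivWithinAt)
      (fun t ht => hnonpos t (interior_subset ht))
  have h := hanti (left_mem_Icc.2 zero_le_one) (right_mem_Icc.2 zero_le_one) zero_le_one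
  simp only [φ, zero_smul, add_zero, one_smul] at h
  linarith

lemma norm_gradient_sq_le_two_mul_sub_iInf (hL : 0 < L)
    (hsmooth : ∀ y y', ‖gradient f y - gradient f y'‖ ≤ L * ‖y - y'‖)
    (hbdd : BddBelow (range f)) (x : F) :
    ‖gradient f x‖ ^ 2 ≤ 2 * L * (f x - ⨅ y, f y) := by
  have hinf : ∀ y, ⨅ y, f y ≤ f y := ciInf_le hbdd
  rcases (norm_nonneg (gradient f x)).eq_or_lt with hn | hn
  · rw [← hn]
    nlinarith [hinf x]
  set n := ‖gradient f x‖ with hn_def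
  -- `f` is not assumed differentiable, but along a gradient step of length `s / L` with `s < 1`
  -- the gradient stays nonzero, and a nonzero `gradient` forces differentiability; the full step
  -- `1 / L` is recovered in the limit `s → 1`.
  have hstep : ∀ s ∈ Ico (0 : ℝ) 1, ⨅ y, f y ≤ f x - n ^ 2 / L * (s - s ^ 2 / 2) := by
    rintro s ⟨hs0, hs1⟩
    set u := -(s / L) • gradient f x
    have hu : ‖u‖ = s / L * n := by
      rw [norm_smul, norm_neg, Real.norm_of_nonneg (by positivity)]
    have hdiff : ∀ t ∈ Icc (0 : ℝ) 1, DifferentiableAt ℝ f (x + t • u) := by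
      rintro t ⟨ht0, ht1⟩
      by_contra hnd
      have h := hsmooth x (x + t • u)
      rw [gradient_eq_zero_of_not_differentiableAt hnd, sub_zero, sub_add_cancel_left, norm_neg,
        norm_smul, Real.norm_of_nonneg ht0, hu, ← hn_def] at h
      have hlen : L * (t * (s / L * n)) = t * s * n := by field_simp
      have hts : t * s < 1 := (mul_le_of_le_one_left hs0 ht1).trans_lt hs1
      nlinarith [mul_lt_mul_of_pos_right hts hn]
    have hdesc := apply_add_le_add_inner_add_sq_norm hsmooth x u hdiff
    have hinner : ⟪gradient f x, u⟫ = -(s / L) * n ^ 2 := by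
      rw [inner_smul_right, real_inner_self_eq_norm_sq]
    rw [hinner, hu] at hdesc
    calc ⨅ y, f y ≤ f (x + u) := hinf _
      _ ≤ _ := hdesc
      _ = f x - n ^ 2 / L * (s - s ^ 2 / 2) := by field_simp; ring
  have hlow := le_sub_div_two_of_forall_mem_Ico hstep
  rw [le_sub_comm, div_div, div_le_iff₀ (by positivity)] at hlow
  linarith

end Smooth

lemma mul_sqrt_add_le_of_sq_le_two_mul {n δ L A B C : ℝ} (hn : 0 ≤ n) (hδ : 0 ≤ δ) (hL : 0 ≤ L)
    (hA : 0 ≤ A) (hB : 0 ≤ B) (hC : 0 ≤ C) (hK : 0 < 2 * A * L + B) (hn2 : n ^ 2 ≤ 2 * L * δ) :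
    n * √(A * n ^ 2 + B * δ + C)
      ≤ √(2 * L * (2 * A * L + B)) * δ + √(L * C ^ 2 / (2 * (2 * A * L + B))) := by
  set K := 2 * A * L + B
  set R := √(2 * L * K) * δ + √(L * C ^ 2 / (2 * K))
  have hcross : √(2 * L * K) * √(L * C ^ 2 / (2 * K)) = L * C := by
    rw [← Real.sqrt_mul (by positivity), ← Real.sqrt_sq (by positivity : 0 ≤ L * C)]
    congr 1
    field_simp
  have hR : 2 * L * K * δ ^ 2 + 2 * L * C * δ ≤ R ^ 2 := by
    have h1 := Real.sq_sqrt (by positivity : 0 ≤ 2 * L * K)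
    have h2 := sq_nonneg √(L * C ^ 2 / (2 * K))
    nlinarith
  have hprod : n ^ 2 * (A * n ^ 2 + B * δ + C) ≤ 2 * L * K * δ ^ 2 + 2 * L * C * δ := by
    have hAn : A * n ^ 2 ≤ A * (2 * L * δ) := mul_le_mul_of_nonneg_left hn2 hA
    calc n ^ 2 * (A * n ^ 2 + B * δ + C) ≤ 2 * L * δ * (A * (2 * L * δ) + B * δ + C) := by
          gcongr
      _ = 2 * L * K * δ ^ 2 + 2 * L * C * δ := by ring
  calc n * √(A * n ^ 2 + B * δ + C) = √(n ^ 2 * (A * n ^ 2 + B * δ + C)) := by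
        rw [Real.sqrt_mul (sq_nonneg n), Real.sqrt_sq hn]
    _ ≤ √(R ^ 2) := Real.sqrt_le_sqrt (hprod.trans hR)
    _ = R := Real.sqrt_sq (by positivity)

lemma norm_poissonV_le {d : ℕ} {𝒵 : Type*} [MeasurableSpace 𝒵] {p : Kernel 𝒵 𝒵}
    [IsMarkovKernel p] {π : Measure 𝒵} [IsFiniteMeasure π] {tmix : ℕ} [NeZero tmix]
    (hmix : ∀ (k : ℕ) (z : 𝒵), tvDist ((kstep p k) z) π ≤ (2 : ℝ)⁻¹ ^ (k / tmix))
    {f : EuclideanSpace ℝ (Fin d) → ℝ}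
    {g : EuclideanSpace ℝ (Fin d) → 𝒵 → EuclideanSpace ℝ (Fin d)} {x : EuclideanSpace ℝ (Fin d)}
    (hgrad : gradient f x = ∫ z, g x z ∂π) (hgmeas : Measurable (g x)) {M : ℝ}
    (hM : ∀ z, ‖g x z‖ ≤ M) (z : 𝒵) :
    ‖poissonV p f g x z‖ ≤ 2 * tmix * M := by
  have hM0 : 0 ≤ M := (norm_nonneg _).trans (hM z)
  refine tsum_of_norm_bounded (g := fun ℓ => M * (2⁻¹ : ℝ) ^ (ℓ / tmix)) ?_ fun ℓ => ?_
  · rw [mul_comm]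
    exact (hasSum_inv_two_pow_div tmix).mul_left M
  · rw [hgrad]
    exact (Measure.norm_integral_sub_integral_le_mul_tvDist hgmeas.stronglyMeasurable hM).trans
      (mul_le_mul_of_nonneg_left (hmix ℓ z) hM0)

theorem poisson_solution_inner_bound_general (d : ℕ)
    (𝒵 : Type) [MeasurableSpace 𝒵]
    (p : Kernel 𝒵 𝒵) [IsMarkovKernel p] (π : Measure 𝒵) [IsProbabilityMeasure π]
    (tmix : ℕ) (htmix : 1 ≤ tmix)
    (f : EuclideanSpace ℝ (Fin d) → ℝ)
    (g : EuclideanSpace ℝ (Fin d) → 𝒵 → EuclideanSpace ℝ (Fin d))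
    (fstar L A B C : ℝ)
    (hA : 0 ≤ A) (hB : 0 ≤ B) (hC : 0 ≤ C) (hL : 0 < L)
    (hALB : 0 < 2 * A * L + B)
    (hbdd : BddBelow (Set.range f)) (hfstar : fstar = ⨅ y, f y)
    (hsmooth : ∀ y y', ‖gradient f y - gradient f y'‖ ≤ L * ‖y - y'‖)
    (hmix : ∀ (k : ℕ) (z : 𝒵), tvDist ((kstep p k) z) π ≤ (2 : ℝ)⁻¹ ^ (k / tmix))
    (hgrad : ∀ x, gradient f x = ∫ z, g x z ∂π)
    (hgmeas : ∀ x, Measurable (g x))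
    (hgABC : ∀ x z, ‖g x z‖ ^ 2 ≤ A * ‖gradient f x‖ ^ 2 + B * (f x - fstar) + C) :
    ∀ (x : EuclideanSpace ℝ (Fin d)) (z : 𝒵),
      (inner ℝ (gradient f x) (poissonV p f g x z) : ℝ)
        ≤ 2 * tmix * Real.sqrt d *
            (Real.sqrt (2 * L * (2 * A * L + B)) * (f x - fstar)
              + Real.sqrt (L * C ^ 2 / (2 * (2 * A * L + B)))) := by
  intro x z
  rcases Nat.eq_zero_or_pos d with rfl | hd
  · simp [Subsingleton.elim (gradient f x) 0]
  have : NeZero tmix := ⟨by omega⟩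
  subst hfstar
  have hgrad_sq := norm_gradient_sq_le_two_mul_sub_iInf hL hsmooth hbdd x
  have hg_le (z' : 𝒵) := Real.le_sqrt_of_sq_le (hgABC x z')
  have hgap : 0 ≤ f x - ⨅ y, f y := sub_nonneg.2 (ciInf_le hbdd x)
  have hscalar := mul_sqrt_add_le_of_sq_le_two_mul (norm_nonneg _) hgap hL.le hA hB hC hALB hgrad_sq
  have hd_sqrt : 1 ≤ √(d : ℝ) := Real.one_le_sqrt.2 (by exact_mod_cast hd)
  calc ⟪gradient f x, poissonV p f g x z⟫
      ≤ ‖gradient f x‖ * ‖poissonV p f g x z‖ := real_inner_le_norm _ _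
    _ ≤ ‖gradient f x‖ * (2 * tmix * √(A * ‖gradient f x‖ ^ 2 + B * (f x - ⨅ y, f y) + C)) := by
        gcongr
        exact norm_poissonV_le hmix (hgrad x) (hgmeas x) hg_le z
    _ = 2 * tmix * (‖gradient f x‖ * √(A * ‖gradient f x‖ ^ 2 + B * (f x - ⨅ y, f y) + C)) := by
        ring
    _ ≤ 2 * tmix * (√(2 * L * (2 * A * L + B)) * (f x - ⨅ y, f y)
          + √(L * C ^ 2 / (2 * (2 * A * L + B)))) := by gcongr
    _ ≤ _ := by
        rw [mul_assoc _ √(d : ℝ)]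
        gcongr
        exact le_mul_of_one_le_left
          (add_nonneg (mul_nonneg (Real.sqrt_nonneg _) hgap) (Real.sqrt_nonneg _)) hd_sqrt

/-- Lemma C.4: if `2AL + B > 0`, then for every `x ∈ ℝ^d` and `z ∈ 𝒵`,
`⟨∇f(x), V(x,z)⟩ ≤ 2 t_mix √d (√(2L(2AL + B)) (f(x) - f⋆) + √(L C²/(2(2AL + B))))`. -/
theorem poisson_solution_inner_bound (d : ℕ)
    (𝒵 : Type) [MeasurableSpace 𝒵] [TopologicalSpace 𝒵] [CompactSpace 𝒵] [Nonempty 𝒵]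
    (p : Kernel 𝒵 𝒵) [IsMarkovKernel p] (π : Measure 𝒵) [IsProbabilityMeasure π]
    (tmix : ℕ) (htmix : 1 ≤ tmix)
    (f : EuclideanSpace ℝ (Fin d) → ℝ)
    (g : EuclideanSpace ℝ (Fin d) → 𝒵 → EuclideanSpace ℝ (Fin d))
    (fstar L A B C : ℝ)
    (hA : 0 ≤ A) (hB : 0 ≤ B) (hC : 0 ≤ C) (hL : 0 < L)
    (hALB : 0 < 2 * A * L + B)
    (hbdd : BddBelow (Set.range f)) (hfstar : fstar = ⨅ y, f y)
    (hsmooth : ∀ y y', ‖gradient f y - gradient f y'‖ ≤ L * ‖y - y'‖)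
    (hinv : π.bind (fun z => p z) = π)
    (hmix : ∀ (k : ℕ) (z : 𝒵), tvDist ((kstep p k) z) π ≤ (2 : ℝ)⁻¹ ^ (k / tmix))
    (hgrad : ∀ x, gradient f x = ∫ z, g x z ∂π)
    (hgmeas : ∀ x, Measurable (g x))
    (hgABC : ∀ x z, ‖g x z‖ ^ 2 ≤ A * ‖gradient f x‖ ^ 2 + B * (f x - fstar) + C) :
    ∀ (x : EuclideanSpace ℝ (Fin d)) (z : 𝒵),
      (inner ℝ (gradient f x) (poissonV p f g x z) : ℝ)
        ≤ 2 * tmix * Real.sqrt d *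
            (Real.sqrt (2 * L * (2 * A * L + B)) * (f x - fstar)
              + Real.sqrt (L * C ^ 2 / (2 * (2 * A * L + B)))) :=
  poisson_solution_inner_bound_general d 𝒵 p π tmix htmix f g fstar L A B C hA hB hC hL hALB hbdd
    hfstar hsmooth hmix hgrad hgmeas hgABC
end
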